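/- arXiv:2212.04907 — 2 statements merged into one kernel-verified Lean document; each statement's English description precedes it below -/
import Mathlib

section
/- For Re s > 1, ζ(s) = ∑_{n=0}^∞ (1/2^{n+1}) ∑_{k=0}^n C(n,k) 1/(k+1)^s. -/
/-!
Since `∑ₙ C(n,k) / 2ⁿ⁺¹ = 1` for every `k`, any convergent series `∑ₖ aₖ` in `ℝ` or `ℂ` (hence
absolutely convergent) equals the double series `∑ₖ ∑ₙ C(n,k) / 2ⁿ⁺¹ · aₖ`. Absolute convergence
lets us sum it in the other order, and for fixed `n` only `k ≤ n` contribute.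
Apply this to `aₖ = (k+1)⁻ˢ`.
-/

open Finset

theorem hasSum_choose_div_two_pow_succ {𝕜 : Type*} [RCLike 𝕜] (k : ℕ) :
    HasSum (fun n : ℕ => (n.choose k : 𝕜) / 2 ^ (n + 1)) 1 := by
  have hr : ‖(2⁻¹ : 𝕜)‖ < 1 := by simp; norm_num
  have hgeom := (hasSum_choose_mul_geometric_of_norm_lt_one k hr).mul_left ((2 : 𝕜)⁻¹ ^ (k + 1))
  have hterm : ∀ n : ℕ, (2⁻¹ : 𝕜) ^ (k + 1) * ((n + k).choose k * 2⁻¹ ^ n) =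
      ((n + k).choose k : 𝕜) / 2 ^ (n + k + 1) := fun n => by
    rw [div_eq_mul_inv, ← inv_pow, show n + k + 1 = (k + 1) + n by ring, pow_add]; ring
  have hsum : (2⁻¹ : 𝕜) ^ (k + 1) * (1 / (1 - 2⁻¹) ^ (k + 1)) = 1 := by
    rw [show (1 : 𝕜) - 2⁻¹ = 2⁻¹ by norm_num]; field_simp
  have hvanish : ∑ n ∈ range k, (n.choose k : 𝕜) / 2 ^ (n + 1) = 0 :=
    sum_eq_zero fun n hn => by simp [Nat.choose_eq_zero_of_lt (mem_range.1 hn)]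
  rw [← hasSum_nat_add_iff' k, hvanish, sub_zero]
  simpa only [hterm, hsum] using hgeom

section EulerTransform

variable {𝕜 : Type*} [RCLike 𝕜] {a : ℕ → 𝕜}

theorem summable_choose_div_two_pow_mul (ha : Summable a) :
    Summable fun p : ℕ × ℕ => (p.2.choose p.1 : 𝕜) / 2 ^ (p.2 + 1) * a p.1 := by
  refine Summable.of_norm ?_
  simp only [norm_mul, norm_div, norm_pow, RCLike.norm_natCast, RCLike.norm_ofNat]
  refine (summable_prod_of_nonneg fun _ => by positivity).2 ⟨fun k => ?_, ?_⟩
  · dsimp only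
    exact (hasSum_choose_div_two_pow_succ (𝕜 := ℝ) k).summable.mul_right _
  · have hcol : ∀ k, ∑' n : ℕ, (n.choose k : ℝ) / 2 ^ (n + 1) * ‖a k‖ = ‖a k‖ := fun k => by
      rw [tsum_mul_right, (hasSum_choose_div_two_pow_succ (𝕜 := ℝ) k).tsum_eq, one_mul]
    simp only [hcol]
    exact summable_norm_iff.2 ha

theorem hasSum_euler_transform (ha : Summable a) :
    HasSum (fun n : ℕ => (1 / 2 ^ (n + 1) : 𝕜) * ∑ k ∈ range (n + 1), n.choose k * a k)
      (∑' k, a k) := by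
  set f : ℕ × ℕ → 𝕜 := fun p => (p.2.choose p.1 : 𝕜) / 2 ^ (p.2 + 1) * a p.1
  have hf : HasSum f (∑' p, f p) := (summable_choose_div_two_pow_mul ha).hasSum
  have hcol (k : ℕ) : HasSum (fun n => f (k, n)) (a k) := by
    simpa only [one_mul] using (hasSum_choose_div_two_pow_succ k).mul_right (a k)
  have hrow (n : ℕ) : HasSum (fun k => f (k, n))
      ((1 / 2 ^ (n + 1) : 𝕜) * ∑ k ∈ range (n + 1), n.choose k * a k) := by
    have hvanish : ∀ k ∉ range (n + 1), f (k, n) = 0 := fun k hk => by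
      simp [f, Nat.choose_eq_zero_of_lt (by simpa using hk : n < k)]
    have hfinite : ∑ k ∈ range (n + 1), f (k, n) =
        (1 / 2 ^ (n + 1) : 𝕜) * ∑ k ∈ range (n + 1), n.choose k * a k := by
      rw [mul_sum]
      exact sum_congr rfl fun k _ => by simp only [f]; ring
    exact hfinite ▸ hasSum_sum_of_ne_finset_zero hvanish
  rw [(hf.prod_fiberwise hcol).tsum_eq]
  exact ((Equiv.prodComm ℕ ℕ).hasSum_iff.2 hf).prod_fiberwise hrow

end EulerTransform

theorem zeta_euler_transform (s : ℂ) (hs : 1 < s.re) :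
    riemannZeta s = ∑' n : ℕ, (1 / 2 ^ (n + 1) : ℂ) *
        ∑ k ∈ range (n + 1), (n.choose k : ℂ) / ((k : ℂ) + 1) ^ s := by
  have hsum : Summable fun k : ℕ => 1 / ((k : ℂ) + 1) ^ s := by
    simpa using (summable_nat_add_iff 1).2 (Complex.summable_one_div_nat_cpow.2 hs)
  rw [zeta_eq_tsum_one_div_nat_add_one_cpow hs, ← (hasSum_euler_transform hsum).tsum_eq]
  simp only [mul_one_div]
end

section
/- For all x ∈ ℝ, e^{-x} = ∑_{n=0}^∞ (1/2^{n+1}) L_n(x), where L_n is the n-th Laguerre polynomial. -/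
/-!
The generating function of the Laguerre polynomials is
`∑ₙ tⁿ Lₙ(x) = exp (-x t / (1 - t)) / (1 - t)` for `|t| < 1`, and `t = 1/2` gives the theorem.
Expanding `tⁿ Lₙ(x)` as `∑_{k+m=n} C(k+m, k) t^(k+m) (-x)ᵏ / k!`, the double series converges
absolutely; summing over `m` first with `∑ₘ C(m+k, k) tᵐ = (1 - t)^-(k+1)` leaves the exponential
series, and regrouping along antidiagonals gives back `∑ₙ tⁿ Lₙ(x)`.
-/

open Finset

/-- The `n`-th Laguerre polynomial as a function. -/
noncomputable def laguerre (n : ℕ) (x : ℝ) : ℝ :=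
  ∑ k ∈ range (n + 1), (n.choose k : ℝ) * (-x) ^ k / (Nat.factorial k)

theorem HasSum.sum_antidiagonal {α A : Type*} [AddCommMonoid α] [TopologicalSpace α]
    [ContinuousAdd α] [RegularSpace α] [AddMonoid A] [HasAntidiagonal A] {f : A × A → α} {a : α}
    (h : HasSum f a) : HasSum (fun n ↦ ∑ p ∈ antidiagonal n, f p) a :=
  (HasAntidiagonal.sigmaAntidiagonalEquivProd.hasSum_iff.2 h).sigma fun n ↦
    sum_coe_sort (antidiagonal n) f ▸ hasSum_fintype _

/-- The term of index `(k, m)` in the double series for `∑ₙ tⁿ Lₙ(x)`, with `n = k + m`. -/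
noncomputable def laguerreGenTerm (x t : ℝ) (p : ℕ × ℕ) : ℝ :=
  ((p.1 + p.2).choose p.1 : ℝ) * t ^ (p.1 + p.2) * ((-x) ^ p.1 / p.1.factorial)

theorem hasSum_laguerreGenTerm_row (x : ℝ) {t : ℝ} (ht : |t| < 1) (k : ℕ) :
    HasSum (fun m ↦ laguerreGenTerm x t (k, m))
      ((-x * t / (1 - t)) ^ k / k.factorial / (1 - t)) := by
  have h1t : 1 - t ≠ 0 := by linarith [le_abs_self t]
  have hterm (m : ℕ) : laguerreGenTerm x t (k, m) =
      t ^ k * ((-x) ^ k / k.factorial) * ((m + k).choose k * t ^ m) := by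
    rw [laguerreGenTerm, add_comm k m, pow_add]
    ring
  have hsum : (-x * t / (1 - t)) ^ k / k.factorial / (1 - t) =
      t ^ k * ((-x) ^ k / k.factorial) * (1 / (1 - t) ^ (k + 1)) := by
    rw [div_pow, mul_pow, pow_succ]
    field_simp
  simpa only [hterm, hsum] using
    (hasSum_choose_mul_geometric_of_norm_lt_one k ht).mul_left (t ^ k * ((-x) ^ k / k.factorial))

theorem abs_laguerreGenTerm (x t : ℝ) (p : ℕ × ℕ) :
    |laguerreGenTerm x t p| = laguerreGenTerm (-|x|) |t| p := by
  simp [laguerreGenTerm, abs_mul, abs_div, abs_pow]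

theorem summable_laguerreGenTerm (x : ℝ) {t : ℝ} (ht : |t| < 1) :
    Summable (laguerreGenTerm x t) := by
  have ht' : |(|t|)| < 1 := by rwa [abs_abs]
  have habs : Summable (laguerreGenTerm (-|x|) |t|) := by
    refine (summable_prod_of_nonneg fun p ↦ ?_).2
      ⟨fun k ↦ (hasSum_laguerreGenTerm_row _ ht' k).summable, ?_⟩
    · simp only [laguerreGenTerm, neg_neg]
      positivity
    · exact ((NormedSpace.expSeries_div_hasSum_exp _).summable.div_const _).congr fun k ↦
        (hasSum_laguerreGenTerm_row _ ht' k).tsum_eq.symm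
  exact Summable.of_abs (habs.congr fun p ↦ (abs_laguerreGenTerm x t p).symm)

theorem hasSum_laguerreGenTerm (x : ℝ) {t : ℝ} (ht : |t| < 1) :
    HasSum (laguerreGenTerm x t) (Real.exp (-x * t / (1 - t)) / (1 - t)) := by
  have hrows := (summable_laguerreGenTerm x ht).hasSum.prod_fiberwise
    (hasSum_laguerreGenTerm_row x ht)
  have hexp : HasSum (fun k : ℕ ↦ (-x * t / (1 - t)) ^ k / k.factorial / (1 - t))
      (Real.exp (-x * t / (1 - t)) / (1 - t)) := by
    rw [Real.exp_eq_exp_ℝ]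
    exact (NormedSpace.expSeries_div_hasSum_exp _).div_const _
  rw [← hrows.unique hexp]
  exact (summable_laguerreGenTerm x ht).hasSum

theorem sum_antidiagonal_laguerreGenTerm (x t : ℝ) (n : ℕ) :
    ∑ p ∈ antidiagonal n, laguerreGenTerm x t p = t ^ n * laguerre n x := by
  rw [Nat.sum_antidiagonal_eq_sum_range_succ_mk, laguerre, mul_sum]
  refine sum_congr rfl fun k hk ↦ ?_
  rw [laguerreGenTerm]
  dsimp only
  rw [Nat.add_sub_cancel' (Nat.lt_succ_iff.1 (mem_range.1 hk))]
  ring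

theorem hasSum_pow_mul_laguerre (x : ℝ) {t : ℝ} (ht : |t| < 1) :
    HasSum (fun n ↦ t ^ n * laguerre n x) (Real.exp (-x * t / (1 - t)) / (1 - t)) := by
  simpa only [sum_antidiagonal_laguerreGenTerm] using
    (hasSum_laguerreGenTerm x ht).sum_antidiagonal

theorem exp_neg_laguerre (x : ℝ) :
    Real.exp (-x) = ∑' n : ℕ, (1 / 2 ^ (n + 1) : ℝ) * laguerre n x := by
  have h := (hasSum_pow_mul_laguerre x (t := 1 / 2) (by norm_num [abs_of_pos])).mul_left (1 / 2)
  have hterm (n : ℕ) :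
      (1 / 2 ^ (n + 1) : ℝ) * laguerre n x = 1 / 2 * ((1 / 2 : ℝ) ^ n * laguerre n x) := by
    rw [pow_succ, one_div_pow]
    ring
  have hval : 1 / 2 * (Real.exp (-x * (1 / 2) / (1 - 1 / 2)) / (1 - 1 / 2)) = Real.exp (-x) := by
    rw [show -x * (1 / 2) / (1 - 1 / 2) = -x by ring]
    ring
  rw [tsum_congr hterm, h.tsum_eq, hval]
end
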